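/- Let N ≥ 1 be an integer, α > 0 and N/(N+α) < q < 1. For m > 0 let E^gKS_{q,α}(m) denote the infimum of 𝓔^gKS_{q,α}[ρ] over all measurable ρ : ℝ^N → [0,∞) with ∫_{ℝ^N} ρ^q dx < ∞ and ∫_{ℝ^N} ρ dx = m. Then for every m > 0, E^gKS_{q,α}(m) = m^{(2N−(2N+α)q)/(N−α−Nq)} · E^gKS_{q,α}(1). In particular, if q = 2N/(2N+α), then E^gKS_{q,α}(m) = E^gKS_{q,α}(1) for all m > 0. -/

import Mathlib

open MeasureTheory Set ENNReal

/-- The repulsion term `∫_{ℝ^N} ρ^q dx`, as an extended nonnegative real. -/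
noncomputable def gksRepulsion (N : ℕ) (q : ℝ) (ρ : EuclideanSpace ℝ (Fin N) → ℝ) : ℝ≥0∞ :=
  ∫⁻ x, ENNReal.ofReal (ρ x ^ q)

/-- The attraction term `(1/2)∬ ρ(x)|x-y|^α ρ(y) dx dy`, as an extended nonnegative real. -/
noncomputable def gksAttraction (N : ℕ) (al : ℝ) (ρ : EuclideanSpace ℝ (Fin N) → ℝ) : ℝ≥0∞ :=
  (1 / 2) * ∫⁻ x, ∫⁻ y,
    ENNReal.ofReal (ρ x) * ENNReal.ofReal (‖x - y‖ ^ al) * ENNReal.ofReal (ρ y)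

/-- The generalized Keller--Segel energy
`𝓔^gKS_{q,α}[ρ] = -∫ ρ^q + (1/2)∬ ρ(x)|x-y|^α ρ(y)`, with values in the extended reals. -/
noncomputable def gksEnergy (N : ℕ) (q al : ℝ) (ρ : EuclideanSpace ℝ (Fin N) → ℝ) : EReal :=
  -(gksRepulsion N q ρ : EReal) + (gksAttraction N al ρ : EReal)

/-- Admissible densities of mass `m`: measurable and nonnegative, with `∫ ρ^q < ∞`
and `∫ ρ = m`. -/
def GksAdmissible (N : ℕ) (q m : ℝ) (ρ : EuclideanSpace ℝ (Fin N) → ℝ) : Prop :=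
  Measurable ρ ∧ (∀ x, 0 ≤ ρ x) ∧ gksRepulsion N q ρ ≠ ⊤ ∧
    ∫⁻ x, ENNReal.ofReal (ρ x) = ENNReal.ofReal m

/-- The generalized Keller--Segel infimum `E^gKS_{q,α}(m)` over densities of mass `m`. -/
noncomputable def gksInf (N : ℕ) (q al m : ℝ) : EReal :=
  sInf { e : EReal | ∃ ρ : EuclideanSpace ℝ (Fin N) → ℝ,
    GksAdmissible N q m ρ ∧ e = gksEnergy N q al ρ }

/-!
The dilation `ρ ↦ μ ρ(l ·)` multiplies the mass by `μ l⁻ᴺ`, the repulsion by `μ^q l⁻ᴺ` and the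
attraction by `μ² l⁻²ᴺ l⁻ᵅ`. For `μ = t^(1 + Nβ)`, `l = t^β` with `β (Nq - N + α) = 2 - q` the
mass is multiplied by `t` and both energy terms by the same factor `t^(2 - αβ)`, so the dilation
maps admissible densities of mass `m` onto those of mass `t m` and scales every energy, hence the
infimum, by `t^(2 - αβ)`.
-/

theorem lintegral_comp_smul {E : Type*} [NormedAddCommGroup E] [NormedSpace ℝ E]
    [MeasurableSpace E] [BorelSpace E] [FiniteDimensional ℝ E] (μ : Measure E)
    [μ.IsAddHaarMeasure] (f : E → ℝ≥0∞) {r : ℝ} (hr : 0 < r) :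
    ∫⁻ x, f (r • x) ∂μ = ENNReal.ofReal (r ^ Module.finrank ℝ E)⁻¹ * ∫⁻ x, f x ∂μ := by
  calc ∫⁻ x, f (r • x) ∂μ = ∫⁻ x, f x ∂(μ.map (r • ·)) :=
        (lintegral_map_equiv f (MeasurableEquiv.smul₀ r hr.ne')).symm
    _ = ENNReal.ofReal (r ^ Module.finrank ℝ E)⁻¹ * ∫⁻ x, f x ∂μ := by
      rw [Measure.map_addHaar_smul μ hr.ne', lintegral_smul_measure, abs_of_pos (by positivity),
        smul_eq_mul]

def rescale {E : Type*} [SMul ℝ E] (μ l : ℝ) (ρ : E → ℝ) : E → ℝ :=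
  fun x => μ * ρ (l • x)

section Rescale

variable {N : ℕ} {ρ : EuclideanSpace ℝ (Fin N) → ℝ} {μ l : ℝ}

theorem gksRepulsion_one : gksRepulsion N 1 ρ = ∫⁻ x, ENNReal.ofReal (ρ x) := by
  simp only [gksRepulsion, Real.rpow_one]

theorem gksRepulsion_rescale (q : ℝ) (hρ : ∀ x, 0 ≤ ρ x) (hμ : 0 ≤ μ) (hl : 0 < l) :
    gksRepulsion N q (rescale μ l ρ) =
      ENNReal.ofReal (μ ^ q * (l ^ N)⁻¹) * gksRepulsion N q ρ := by
  simp only [gksRepulsion, rescale, Real.mul_rpow hμ (hρ _),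
    ENNReal.ofReal_mul (Real.rpow_nonneg hμ q)]
  rw [lintegral_const_mul' _ _ ofReal_ne_top,
    lintegral_comp_smul volume (fun x => ENNReal.ofReal (ρ x ^ q)) hl, finrank_euclideanSpace_fin,
    ← mul_assoc, ← ENNReal.ofReal_mul (by positivity)]

theorem gksAttraction_rescale (al : ℝ) (hμ : 0 ≤ μ) (hl : 0 < l) :
    gksAttraction N al (rescale μ l ρ) =
      ENNReal.ofReal (μ ^ 2 * ((l ^ N)⁻¹) ^ 2 * (l ^ al)⁻¹) * gksAttraction N al ρ := by
  set K : ℝ≥0∞ := ENNReal.ofReal (μ ^ 2 * (l ^ al)⁻¹)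
  set F : EuclideanSpace ℝ (Fin N) → EuclideanSpace ℝ (Fin N) → ℝ≥0∞ := fun u v =>
    ENNReal.ofReal (ρ u) * ENNReal.ofReal (‖u - v‖ ^ al) * ENNReal.ofReal (ρ v)
  have hF : ∀ x y, ENNReal.ofReal (rescale μ l ρ x) * ENNReal.ofReal (‖x - y‖ ^ al) *
      ENNReal.ofReal (rescale μ l ρ y) = K * F (l • x) (l • y) := by
    intro x y
    have hnorm : ‖x - y‖ ^ al = (l ^ al)⁻¹ * ‖l • x - l • y‖ ^ al := by
      rw [← smul_sub, norm_smul, Real.norm_of_nonneg hl.le, Real.mul_rpow hl.le (norm_nonneg _),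
        inv_mul_cancel_left₀ (Real.rpow_pos_of_pos hl al).ne']
    simp only [K, F, rescale, hnorm, ENNReal.ofReal_mul hμ, ENNReal.ofReal_mul (sq_nonneg μ),
      ENNReal.ofReal_mul (inv_nonneg.2 (Real.rpow_nonneg hl.le al)), ENNReal.ofReal_pow hμ]
    ring
  have hK : K ≠ ⊤ := ofReal_ne_top
  have hinner : ∀ x, ∫⁻ y, K * F (l • x) (l • y) =
      K * ENNReal.ofReal (l ^ N)⁻¹ * ∫⁻ v, F (l • x) v := fun x => by
    rw [lintegral_const_mul' K _ hK, lintegral_comp_smul volume (F (l • x)) hl,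
      finrank_euclideanSpace_fin, mul_assoc]
  simp only [gksAttraction, hF, hinner]
  rw [lintegral_const_mul' _ _ (mul_ne_top hK ofReal_ne_top),
    lintegral_comp_smul volume (fun u => ∫⁻ v, F u v) hl, finrank_euclideanSpace_fin,
    show μ ^ 2 * ((l ^ N)⁻¹) ^ 2 * (l ^ al)⁻¹ = (μ ^ 2 * (l ^ al)⁻¹) * ((l ^ N)⁻¹) ^ 2 by ring,
    ENNReal.ofReal_mul (by positivity), ENNReal.ofReal_pow (by positivity)]
  ring

theorem GksAdmissible.rescale {q m : ℝ} (h : GksAdmissible N q m ρ) (hμ : 0 ≤ μ) (hl : 0 < l) :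
    GksAdmissible N q (μ * (l ^ N)⁻¹ * m) (rescale μ l ρ) := by
  obtain ⟨hmeas, hnonneg, hrep, hmass⟩ := h
  refine ⟨(hmeas.comp (measurable_const_smul l)).const_mul μ, fun x => mul_nonneg hμ (hnonneg _),
    ?_, ?_⟩
  · rw [gksRepulsion_rescale q hnonneg hμ hl]
    exact mul_ne_top ofReal_ne_top hrep
  · rw [← gksRepulsion_one, gksRepulsion_rescale 1 hnonneg hμ hl, gksRepulsion_one, hmass,
      Real.rpow_one, ← ENNReal.ofReal_mul (by positivity)]

theorem gksEnergy_rescale {q al c : ℝ} (hρ : ∀ x, 0 ≤ ρ x) (hμ : 0 ≤ μ) (hl : 0 < l)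
    (hrep : μ ^ q * (l ^ N)⁻¹ = c) (hattr : μ ^ 2 * ((l ^ N)⁻¹) ^ 2 * (l ^ al)⁻¹ = c) :
    gksEnergy N q al (rescale μ l ρ) = c * gksEnergy N q al ρ := by
  have hc : 0 ≤ c := hrep ▸ by positivity
  rw [gksEnergy, gksEnergy, gksRepulsion_rescale q hρ hμ hl, gksAttraction_rescale al hμ hl,
    hrep, hattr, EReal.coe_ennreal_mul, EReal.coe_ennreal_mul, EReal.coe_ennreal_ofReal,
    max_eq_left hc, EReal.left_distrib_of_nonneg_of_ne_top (EReal.coe_nonneg.2 hc)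
      (EReal.coe_ne_top c), mul_neg]

end Rescale

section Infimum

variable {N : ℕ} {q al : ℝ}

theorem gksInf_rescale_le {μ l c : ℝ} (hμ : 0 < μ) (hl : 0 < l)
    (hrep : μ ^ q * (l ^ N)⁻¹ = c) (hattr : μ ^ 2 * ((l ^ N)⁻¹) ^ 2 * (l ^ al)⁻¹ = c) (m : ℝ) :
    gksInf N q al (μ * (l ^ N)⁻¹ * m) ≤ c * gksInf N q al m := by
  have hc : (0 : EReal) < c := EReal.coe_pos.2 (hrep ▸ by positivity)
  rw [← EReal.div_le_iff_le_mul hc (EReal.coe_ne_top c)]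
  refine le_sInf ?_
  rintro _ ⟨ρ, hρ, rfl⟩
  rw [EReal.div_le_iff_le_mul hc (EReal.coe_ne_top c), ← gksEnergy_rescale hρ.2.1 hμ.le hl hrep
    hattr]
  exact sInf_le ⟨_, hρ.rescale hμ.le hl, rfl⟩

theorem gksInf_mul_le {β t : ℝ} (hβ : β * (N * q - N + al) = 2 - q) (ht : 0 < t) (m : ℝ) :
    gksInf N q al (t * m) ≤ (t ^ (2 - al * β) : ℝ) * gksInf N q al m := by
  have hlN : ((t ^ β) ^ N)⁻¹ = t ^ (-(β * N)) := by
    rw [← Real.rpow_mul_natCast ht.le, Real.rpow_neg ht.le]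
  have hmass : t ^ (1 + N * β) * ((t ^ β) ^ N)⁻¹ = t := by
    rw [hlN, ← Real.rpow_add ht, show 1 + N * β + -(β * N) = 1 by ring, Real.rpow_one]
  have hrep : (t ^ (1 + N * β)) ^ q * ((t ^ β) ^ N)⁻¹ = t ^ (2 - al * β) := by
    rw [hlN, ← Real.rpow_mul ht.le, ← Real.rpow_add ht]
    congr 1
    linear_combination hβ
  have hattr : (t ^ (1 + N * β)) ^ 2 * (((t ^ β) ^ N)⁻¹) ^ 2 * ((t ^ β) ^ al)⁻¹ =
      t ^ (2 - al * β) := by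
    rw [hlN, ← Real.rpow_mul ht.le, ← Real.rpow_neg ht.le, ← Real.rpow_mul_natCast ht.le,
      ← Real.rpow_mul_natCast ht.le, ← Real.rpow_add ht, ← Real.rpow_add ht]
    congr 1
    push_cast
    ring
  simpa only [hmass] using gksInf_rescale_le (by positivity) (by positivity) hrep hattr m

theorem gksInf_mul_eq {β t : ℝ} (hβ : β * (N * q - N + al) = 2 - q) (ht : 0 < t) (m : ℝ) :
    gksInf N q al (t * m) = (t ^ (2 - al * β) : ℝ) * gksInf N q al m := by
  have hc : (0 : EReal) < (t ^ (2 - al * β) : ℝ) := EReal.coe_pos.2 (by positivity)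
  refine le_antisymm (gksInf_mul_le hβ ht m) ?_
  have hback := gksInf_mul_le hβ (inv_pos.2 ht) (t * m)
  rw [inv_mul_cancel_left₀ ht.ne', Real.inv_rpow ht.le, EReal.coe_inv, ← EReal.div_eq_inv_mul,
    EReal.le_div_iff_mul_le hc (EReal.coe_ne_top _)] at hback
  rwa [mul_comm]

end Infimum

theorem gks_inf_mass_scaling_general (N : ℕ) (al : ℝ) (hal : 0 < al)
    (q : ℝ) (hq0 : (N : ℝ) / (N + al) < q) (m : ℝ) (hm : 0 < m) :
    gksInf N q al m =
      ((m ^ ((2 * (N : ℝ) - (2 * N + al) * q) / ((N : ℝ) - al - N * q)) : ℝ) : EReal) *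
        gksInf N q al 1 ∧
    (q = 2 * (N : ℝ) / (2 * N + al) → gksInf N q al m = gksInf N q al 1) := by
  have hd : 0 < N * q - N + al := by
    have := (div_lt_iff₀ (by positivity)).1 hq0
    nlinarith
  obtain ⟨β, hβ⟩ : ∃ β, β * (N * q - N + al) = 2 - q := ⟨_, div_mul_cancel₀ (2 - q) hd.ne'⟩
  have hexp : 2 - al * β = (2 * (N : ℝ) - (2 * N + al) * q) / ((N : ℝ) - al - N * q) := by
    rw [_root_.eq_div_iff (by linarith)]
    linear_combination al * hβ
  have hscale := gksInf_mul_eq hβ hm 1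
  rw [mul_one, hexp] at hscale
  refine ⟨hscale, fun hq => ?_⟩
  have hnum : 2 * (N : ℝ) - (2 * N + al) * q = 0 := by
    rw [hq, mul_div_cancel₀ _ (by positivity), sub_self]
  rw [hscale, hnum, zero_div, Real.rpow_zero, EReal.coe_one, one_mul]

/-- Scaling in the mass: for `N/(N+α) < q < 1` and every `m > 0`,
`E^gKS_{q,α}(m) = m^{(2N-(2N+α)q)/(N-α-Nq)} E^gKS_{q,α}(1)`; in particular for
`q = 2N/(2N+α)` the infimum is independent of the mass. -/
theorem gks_inf_mass_scaling (N : ℕ) (hN : 1 ≤ N) (al : ℝ) (hal : 0 < al)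
    (q : ℝ) (hq0 : (N : ℝ) / (N + al) < q) (hq1 : q < 1) (m : ℝ) (hm : 0 < m) :
    gksInf N q al m =
      ((m ^ ((2 * (N : ℝ) - (2 * N + al) * q) / ((N : ℝ) - al - N * q)) : ℝ) : EReal) *
        gksInf N q al 1 ∧
    (q = 2 * (N : ℝ) / (2 * N + al) → gksInf N q al m = gksInf N q al 1) :=
  gks_inf_mass_scaling_general N al hal q hq0 m hm
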